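/- Define QBER(p) = 1 − (1 − 2p + 10p²/9)/(1 − 4p/3 + 8p²/9) for p ∈ [0,1]. Then QBER(p) < p for every p ∈ (0, 1/2), and QBER(1/2) = 1/2. (Hence the probability threshold of the single-qubit error-detection scheme using one noisy EPR pair is p_th = 1/2.) -/

import Mathlib

/-- The qubit error ratio of the single-qubit error-detection scheme using one noisy EPR
pair over quantum depolarizing channels with depolarizing probability `p`. -/
noncomputable def QBER (p : ℝ) : ℝ :=
  1 - (1 - 2*p + 10*p^2/9) / (1 - 4*p/3 + 8*p^2/9)

-- The denominator equals `8/9 * (p - 3/4)^2 + 1/2`.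
lemma QBER_denom_pos (p : ℝ) : 0 < 1 - 4*p/3 + 8*p^2/9 := by
  nlinarith [sq_nonneg (p - 3/4)]

lemma sub_QBER (p : ℝ) :
    p - QBER p = p * (1 - 2*p) * (3 - 4*p) / (9 * (1 - 4*p/3 + 8*p^2/9)) := by
  have hD := (QBER_denom_pos p).ne'
  have h9D : 9 * (1 - 4*p/3 + 8*p^2/9) ≠ 0 := mul_ne_zero (by norm_num) hD
  rw [QBER, one_sub_div hD, sub_div' hD, div_eq_div_iff hD h9D]
  ring

/-- `QBER(p) < p` for every `p ∈ (0, 1/2)`, and `QBER(1/2) = 1/2`; hence the probability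
threshold of the single-qubit error-detection scheme using one noisy EPR pair is
`p_th = 1/2`. -/
theorem stmt3 :
    (∀ p ∈ Set.Ioo (0 : ℝ) (1/2), QBER p < p) ∧ QBER (1/2) = 1/2 := by
  constructor
  · rintro p ⟨hp_pos, hp_lt⟩
    rw [← sub_pos, sub_QBER]
    have hnum : 0 < p * (1 - 2*p) * (3 - 4*p) :=
      mul_pos (mul_pos hp_pos (by linarith)) (by linarith)
    exact div_pos hnum (mul_pos (by norm_num) (QBER_denom_pos p))
  · rw [eq_comm, ← sub_eq_zero, sub_QBER]
    norm_num
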